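/- With the notation of the hierarchical walk: if in addition v ∈ ℂ^{d+1} satisfies (P_H Λ) v = μ v, where Λ = Σ_{j=0}^d λ_j |j⟩⟨j| and P_j w_j = λ_j w_j for each j, then v ⊗ (⊗_{j=0}^d w_j) is an eigenvector of P_G = Σ_j (P_H |j⟩⟨j|) ⊗ Ã_j with eigenvalue μ. -/

import Mathlib

/-!
Each `Ã_j` only touches the `j`-th tensor factor, where it acts as `P_j`, so `⊗_k w_k` is a common
eigenvector of the `Ã_j`, with eigenvalues `λ_j`. On a product vector `v ⊗ u` with `Ã_j u = λ_j u`
for all `j`, the block `(P_H |j⟩⟨j|) ⊗ Ã_j` of `P_G` therefore contributes `λ_j v_j P_H e_j ⊗ u`,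
and summing over `j` gives `(P_H Λ v) ⊗ u = μ (v ⊗ u)`.
-/

open Matrix Finset

section

variable {ι R : Type*} [Fintype ι] [DecidableEq ι] [CommSemiring R] {β : ι → Type*}
  [∀ i, Fintype (β i)]

theorem Finset.sum_pi_mul_prod_erase (j : ι) (f : β j → R) (g : ∀ i, β i → R) :
    ∑ y : ∀ i, β i, f (y j) * ∏ k ∈ univ.erase j, g k (y k) =
      (∑ a, f a) * ∏ k ∈ univ.erase j, ∑ b, g k b := by
  have prod_update (F : ∀ k, (β k → R) → R) :
      ∏ k, F k (Function.update g j f k) = F j f * ∏ k ∈ univ.erase j, F k (g k) := by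
    simp_rw [Function.apply_update F, prod_update_of_mem (mem_univ j), sdiff_singleton_eq_erase]
  rw [← prod_update fun k φ => ∑ b, φ b, Fintype.prod_sum]
  exact sum_congr rfl fun y _ => (prod_update fun k φ => φ (y k)).symm

variable [∀ i, DecidableEq (β i)]

/-- The paper's `Ã_j = 1 ⊗ ⋯ ⊗ A ⊗ ⋯ ⊗ 1` (with `A` in position `j`), entrywise. -/
def Matrix.actOnFactor (j : ι) (A : Matrix (β j) (β j) R) : Matrix (∀ i, β i) (∀ i, β i) R :=
  of fun x y => A (x j) (y j) * ∏ k ∈ univ.erase j, if x k = y k then 1 else 0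

theorem Matrix.actOnFactor_mulVec_prod (j : ι) (A : Matrix (β j) (β j) R) (w : ∀ i, β i → R) :
    actOnFactor j A *ᵥ (fun y => ∏ k, w k (y k)) =
      fun x => (A *ᵥ w j) (x j) * ∏ k ∈ univ.erase j, w k (x k) := by
  ext x
  have summand (y : ∀ i, β i) :
      (A (x j) (y j) * ∏ k ∈ univ.erase j, if x k = y k then 1 else 0) * ∏ k, w k (y k) =
        A (x j) (y j) * w j (y j) *
          ∏ k ∈ univ.erase j, (if x k = y k then 1 else 0) * w k (y k) := by
    rw [← mul_prod_erase univ _ (mem_univ j), prod_mul_distrib]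
    ring
  simp only [mulVec, dotProduct, actOnFactor, of_apply, summand]
  rw [sum_pi_mul_prod_erase j (fun a => A (x j) a * w j a)
    (fun k b => (if x k = b then 1 else 0) * w k b)]
  simp

theorem Matrix.actOnFactor_mulVec_prod_of_mulVec_eq {j : ι} {A : Matrix (β j) (β j) R}
    {w : ∀ i, β i → R} {c : R} (hw : A *ᵥ w j = c • w j) :
    actOnFactor j A *ᵥ (fun y => ∏ k, w k (y k)) = c • fun y => ∏ k, w k (y k) := by
  ext x
  simp only [actOnFactor_mulVec_prod, hw, Pi.smul_apply, smul_eq_mul]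
  rw [mul_assoc, mul_prod_erase univ (fun k => w k (x k)) (mem_univ j)]

end

section

variable {ι κ R : Type*} [Fintype ι] [DecidableEq ι] [Fintype κ] [CommSemiring R]

/-- Entrywise form of `∑ j, (P_H |j⟩⟨j|) ⊗ A_j`. -/
def hierarchicalMatrix (PH : Matrix ι ι R) (A : ι → Matrix κ κ R) :
    Matrix (ι × κ) (ι × κ) R :=
  of fun x y => ∑ j, (PH x.1 j * if y.1 = j then 1 else 0) * A j x.2 y.2

theorem hierarchicalMatrix_mulVec {PH : Matrix ι ι R} {A : ι → Matrix κ κ R} {lam : ι → R}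
    {u : κ → R} (hu : ∀ j, A j *ᵥ u = lam j • u) (v : ι → R) :
    hierarchicalMatrix PH A *ᵥ (fun x => v x.1 * u x.2) =
      fun x => ((PH * diagonal lam) *ᵥ v) x.1 * u x.2 := by
  ext x
  have hu' (j : ι) : ∑ y, A j x.2 y * u y = lam j * u x.2 := congrFun (hu j) x.2
  simp only [mulVec, dotProduct, hierarchicalMatrix, of_apply, Fintype.sum_prod_type, sum_mul,
    mul_diagonal, mul_ite, mul_one, mul_zero, ite_mul, zero_mul, sum_ite_eq, mem_univ, if_true]
  refine sum_congr rfl fun j _ => ?_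
  calc ∑ y, PH x.1 j * A j x.2 y * (v j * u y)
      = PH x.1 j * v j * ∑ y, A j x.2 y * u y := by
        rw [mul_sum]; exact sum_congr rfl fun y _ => by ring
    _ = PH x.1 j * lam j * v j * u x.2 := by rw [hu']; ring

end

/-- If `(P_H Λ) v = μ v` and `P_j w_j = λ_j w_j`, then the product vector
`v ⊗ (⊗_j w_j)` is an eigenvector of the hierarchical transition matrix `P_G`
with eigenvalue `μ`. -/
theorem stmt_2 (d : ℕ) (n : Fin (d + 1) → ℕ)
    (PH : Matrix (Fin (d + 1)) (Fin (d + 1)) ℂ)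
    (P : ∀ j, Matrix (Fin (n j)) (Fin (n j)) ℂ)
    (lam : Fin (d + 1) → ℂ)
    (w : ∀ j, Fin (n j) → ℂ)
    (hw : ∀ j, (P j) *ᵥ (w j) = lam j • w j)
    (PG : Matrix (Fin (d + 1) × (∀ j, Fin (n j)))
                 (Fin (d + 1) × (∀ j, Fin (n j))) ℂ)
    (hPG : ∀ x y, PG x y =
      ∑ j : Fin (d + 1),
        (PH x.1 j * (if y.1 = j then 1 else 0)) *
          ((P j) (x.2 j) (y.2 j) *
            ∏ k ∈ Finset.univ.erase j, (if x.2 k = y.2 k then (1 : ℂ) else 0)))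
    (v : Fin (d + 1) → ℂ) (μ : ℂ)
    (hv : (PH * Matrix.diagonal lam) *ᵥ v = μ • v) :
    PG *ᵥ (fun x => v x.1 * ∏ j, w j (x.2 j)) =
      μ • fun x => v x.1 * ∏ j, w j (x.2 j) := by
  have hPG' : PG = hierarchicalMatrix PH fun j => actOnFactor j (P j) := by
    ext x y
    exact hPG x y
  have hA (j : Fin (d + 1)) : actOnFactor j (P j) *ᵥ (fun y => ∏ k, w k (y k)) =
      lam j • fun y => ∏ k, w k (y k) :=
    actOnFactor_mulVec_prod_of_mulVec_eq (hw j)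
  rw [hPG', hierarchicalMatrix_mulVec hA v, hv]
  ext x
  exact mul_assoc _ _ _
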